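/- arXiv:2211.16143 — 6 statements merged into one kernel-verified Lean document; each statement's English description precedes it below -/
import Mathlib

section
/- There exist a normalized monotone submodular valuation function v_p and a normalized additive valuation function v_q on the four-item set M = {1,2,3,4} such that: item 1 maximizes v_p among all singletons of M; item 2 maximizes v_q among all singletons of {2,3,4}; item 3 maximizes v_p among all singletons of {3,4}; and yet v_p({1,3}) < v_p({2,4}). Consequently, a valid execution of the round-robin algorithm in which agent p (the prioritized agent) picks first produces the allocation A_p = {1,3}, A_q = {2,4} in which p envies q, so round-robin does not guarantee EFprior for submodular valuations. -/
/-- A set function on subsets of `Fin 4` is submodular: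
marginal gains are diminishing. -/
def Submodular (v : Finset (Fin 4) → ℝ) : Prop :=
  ∀ S T : Finset (Fin 4), S ⊆ T → ∀ g ∉ T,
    v (insert g T) - v T ≤ v (insert g S) - v S

/-- Coverage sets for the items. -/
def covf : Fin 4 → Finset (Fin 5)
  | 0 => {0, 1}
  | 1 => {2, 3}
  | 2 => {0}
  | 3 => {4}

/-- Natural-valued coverage valuation. -/
def vpn (S : Finset (Fin 4)) : ℕ := (S.biUnion covf).card

lemma vpn_submod : ∀ S T : Finset (Fin 4), S ⊆ T → ∀ g, g ∉ T →
    vpn (insert g T) + vpn S ≤ vpn (insert g S) + vpn T := by decide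

lemma vpn_mono : ∀ S T : Finset (Fin 4), T ⊆ S → vpn T ≤ vpn S := by decide

/-- There are a normalized monotone submodular valuation `vp` and a normalized
additive valuation `vq` on the four items `{0,1,2,3}` (representing items
`{1,2,3,4}`) such that: item `0` is a favorite item of `p` in `{0,1,2,3}`;
item `1` is a favorite item of `q` in `{1,2,3}`; item `2` is a favorite item
of `p` in `{2,3}`; and yet `vp {0,2} < vp {1,3}`.  Consequently round-robin
with `p` first can output `A_p = {0,2}`, `A_q = {1,3}`, in which `p` envies
`q`, so round-robin does not guarantee EFprior for submodular valuations. -/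
theorem round_robin_fails_submodular :
    ∃ vp vq : Finset (Fin 4) → ℝ,
      -- vp is normalized, monotone, nonnegative and submodular
      vp ∅ = 0 ∧ (∀ S T : Finset (Fin 4), T ⊆ S → vp T ≤ vp S) ∧
      (∀ S : Finset (Fin 4), 0 ≤ vp S) ∧ Submodular vp ∧
      -- vq is normalized, nonnegative and additive
      vq ∅ = 0 ∧ (∀ S : Finset (Fin 4), 0 ≤ vq S) ∧
      (∀ S : Finset (Fin 4), vq S = ∑ g ∈ S, vq {g}) ∧
      -- item 0 maximizes vp among all singletons
      (∀ g : Fin 4, vp {g} ≤ vp {0}) ∧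
      -- item 1 maximizes vq among singletons of {1,2,3}
      (∀ g ∈ ({1, 2, 3} : Finset (Fin 4)), vq {g} ≤ vq {1}) ∧
      -- item 2 maximizes vp among singletons of {2,3}
      (∀ g ∈ ({2, 3} : Finset (Fin 4)), vp {g} ≤ vp {2}) ∧
      -- yet p envies q in the round-robin outcome A_p = {0,2}, A_q = {1,3}
      vp {0, 2} < vp {1, 3} := by
  refine ⟨fun S => (vpn S : ℝ), fun S => (S.card : ℝ), ?_, ?_, ?_, ?_, ?_, ?_, ?_, ?_, ?_, ?_, ?_⟩
  · norm_num [vpn]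
  · intro S T h
    have := vpn_mono S T h
    dsimp only
    exact_mod_cast this
  · intro S; positivity
  · intro S T hST g hg
    have := vpn_submod S T hST g hg
    have h1 : (vpn (insert g T) : ℝ) + vpn S ≤ (vpn (insert g S) : ℝ) + vpn T := by
      exact_mod_cast this
    dsimp only
    linarith
  · simp
  · intro S; positivity
  · intro S
    dsimp only
    rw [Finset.card_eq_sum_ones S]
    push_cast
    simp
  · intro g
    have : vpn {g} ≤ vpn {0} := by revert g; decide
    dsimp only
    exact_mod_cast this
  · intro g _; norm_num
  · intro g hg
    have : vpn {g} ≤ vpn {2} := by fin_cases hg <;> decide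
    dsimp only
    exact_mod_cast this
  · have : vpn {0, 2} < vpn {1, 3} := by decide
    dsimp only
    exact_mod_cast this
end

section
/- For any finite set N of agents, finite set M of indivisible items, normalized monotone valuation functions v_i, and any subset P ⊆ N with |P| = 1, there exists a complete allocation (A_1, ..., A_n) of M that is EFprior with respect to P. -/
/-- `A` is a (complete) allocation of the item set `M` among `n` agents:
a partition of `M` into `n` (possibly empty) bundles. -/
def IsAllocation {ι : Type*} [DecidableEq ι] {n : ℕ} (M : Finset ι)
    (A : Fin n → Finset ι) : Prop :=
  (∀ i j : Fin n, i ≠ j → Disjoint (A i) (A j)) ∧ Finset.univ.biUnion A = M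

/-- Envy-freeness up to one item. -/
def EF1 {ι : Type*} [DecidableEq ι] {n : ℕ} (v : Fin n → Finset ι → ℝ)
    (A : Fin n → Finset ι) : Prop :=
  ∀ i j : Fin n, i ≠ j → A j = ∅ ∨ ∃ g ∈ A j, v i ((A j).erase g) ≤ v i (A i)

/-- Envy-freeness with prioritized agents `P`: EF1, and no agent in `P`
envies any agent outside `P`. -/
def EFprior {ι : Type*} [DecidableEq ι] {n : ℕ} (v : Fin n → Finset ι → ℝ)
    (A : Fin n → Finset ι) (P : Finset (Fin n)) : Prop :=
  EF1 v A ∧ ∀ i ∈ P, ∀ j ∉ P, v i (A j) ≤ v i (A i)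

/-!
Items are added one at a time, keeping the allocation EF1 with the prioritized agent `p` envying
nobody. Before an item `a` is added, the bundles are permuted to a Pareto-optimal reassignment of
themselves; this preserves both properties and leaves no envy cycles, so following enviers
backwards from `p` ends at an unenvied bundle `B s`, and shifting bundles along that path gives
`p` the bundle `B s` while everybody else weakly gains. If `p` values `B s ∪ {a}` at most as much
as its own bundle, `a` goes to `s`; otherwise `p` receives `B s ∪ {a}` after the shift and then
envies nobody. Either way the receiver's bundle was unenvied, so EF1 survives.
-/

namespace Function

variable {α : Type*}

theorem exists_iterate_mem_periodicPts [Finite α] (g : α → α) (x : α) :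
    ∃ m, g^[m] x ∈ periodicPts g := by
  obtain ⟨k, l, hkl, heq⟩ := Finite.exists_ne_map_eq_of_infinite fun m => g^[m] x
  wlog hlt : k < l generalizing k l
  · exact this l k hkl.symm heq.symm (hkl.lt_or_gt.resolve_left hlt)
  refine ⟨k, mk_mem_periodicPts (Nat.sub_pos_of_lt hlt) ?_⟩
  change g^[l - k] (g^[k] x) = g^[k] x
  rw [← iterate_add_apply, Nat.sub_add_cancel hlt.le]
  exact heq.symm

theorem exists_perm_rightInvOn_periodicPts (g : α → α) :
    ∃ τ : Equiv.Perm α, Set.RightInvOn τ g (periodicPts g) ∧ ∀ y ∉ periodicPts g, τ y = y := by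
  classical
  let e : Equiv.Perm (periodicPts g) := ((bijOn_periodicPts g).equiv g).symm
  refine ⟨Equiv.Perm.ofSubtype e, fun y hy => ?_,
    fun y hy => Equiv.Perm.ofSubtype_apply_of_not_mem e hy⟩
  rw [Equiv.Perm.ofSubtype_apply_of_mem e hy]
  exact congrArg Subtype.val (((bijOn_periodicPts g).equiv g).apply_symm_apply ⟨y, hy⟩)

end Function

section Pareto

variable {α β : Type*} {v : α → β → ℝ} {A : α → β}

def ParetoOptimalAmongPerms (v : α → β → ℝ) (A : α → β) : Prop :=
  ∀ τ : Equiv.Perm α, (∀ i, v i (A i) ≤ v i (A (τ i))) → ∀ i, v i (A (τ i)) ≤ v i (A i)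

lemma exists_perm_paretoOptimalAmongPerms [Fintype α] [DecidableEq α] (v : α → β → ℝ)
    (A : α → β) :
    ∃ σ : Equiv.Perm α,
      (∀ i, v i (A i) ≤ v i (A (σ i))) ∧ ParetoOptimalAmongPerms v (A ∘ σ) := by
  obtain ⟨σ, hσ, hmax⟩ := Finset.exists_max_image
    (Finset.univ.filter fun σ : Equiv.Perm α => ∀ i, v i (A i) ≤ v i (A (σ i)))
    (fun σ => ∑ i, v i (A (σ i))) ⟨1, by simp⟩
  rw [Finset.mem_filter_univ] at hσ
  refine ⟨σ, hσ, fun τ hτ i => not_lt.1 fun hi => ?_⟩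
  have hστ : ∀ i, v i (A i) ≤ v i (A ((σ * τ) i)) := fun i => (hσ i).trans (hτ i)
  exact (hmax (σ * τ) ((Finset.mem_filter_univ _).2 hστ)).not_gt
    (Finset.sum_lt_sum (fun i _ => hτ i) ⟨i, Finset.mem_univ _, hi⟩)

lemma ParetoOptimalAmongPerms.exists_perm_unenvied [Finite α] (hA : ParetoOptimalAmongPerms v A)
    {p : α} (hp : ∀ j, v p (A j) ≤ v p (A p)) :
    ∃ τ : Equiv.Perm α,
      (∀ i, v i (A (τ p)) ≤ v i (A i)) ∧ ∀ i ≠ p, v i (A i) ≤ v i (A (τ i)) := by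
  classical
  -- `g` sends an envied agent to one of its enviers and an unenvied one to `p`. Its inverse `τ` on
  -- its periodic points gives every periodic agent other than `p` a bundle it envies; Pareto
  -- optimality therefore forces `p` to be periodic, and then `τ p` is unenvied.
  let g : α → α := fun x => if h : ∃ y, v y (A y) < v y (A x) then h.choose else p
  have hg : ∀ x, v (g x) (A (g x)) < v (g x) (A x) ∨ (∀ y, v y (A x) ≤ v y (A y)) ∧ g x = p := by
    intro x
    by_cases h : ∃ y, v y (A y) < v y (A x)
    · exact Or.inl (by simpa only [g, dif_pos h] using h.choose_spec)
    · simp only [not_exists, not_lt] at h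
      exact Or.inr ⟨h, dif_neg (by simpa using h)⟩
  obtain ⟨τ, hgτ, hτ⟩ := Function.exists_perm_rightInvOn_periodicPts g
  have henvy : ∀ y ∈ Function.periodicPts g, y ≠ p → v y (A y) < v y (A (τ y)) := by
    intro y hy hyp
    have := hg (τ y)
    rw [hgτ hy] at this
    exact this.resolve_right fun h => hyp h.2
  have hp_mem : p ∈ Function.periodicPts g := by
    by_contra hp'
    obtain ⟨m, hm⟩ := Function.exists_iterate_mem_periodicPts g p
    have hmp : g^[m] p ≠ p := fun h => hp' (h ▸ hm)
    refine (henvy _ hm hmp).not_ge (hA τ (fun i => ?_) _)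
    by_cases hi : i ∈ Function.periodicPts g
    · exact (henvy i hi (ne_of_mem_of_not_mem hi hp')).le
    · rw [hτ i hi]
  refine ⟨τ, fun i => ?_, fun i hip => ?_⟩
  · have := hg (τ p)
    rw [hgτ hp_mem] at this
    exact (this.resolve_left (hp (τ p)).not_gt).1 i
  · by_cases hi : i ∈ Function.periodicPts g
    · exact (henvy i hi hip).le
    · rw [hτ i hi]

end Pareto

section Allocation

variable {ι : Type*} [DecidableEq ι] {n : ℕ} {M : Finset ι} {A : Fin n → Finset ι}
  {v : Fin n → Finset ι → ℝ} {a : ι} {c i : Fin n}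

def giveItem (A : Fin n → Finset ι) (c : Fin n) (a : ι) : Fin n → Finset ι :=
  Function.update A c (insert a (A c))

@[simp]
lemma giveItem_self : giveItem A c a c = insert a (A c) :=
  Function.update_self ..

@[simp]
lemma giveItem_of_ne (h : i ≠ c) : giveItem A c a i = A i :=
  Function.update_of_ne h ..

lemma subset_giveItem (i : Fin n) : A i ⊆ giveItem A c a i := by
  rcases eq_or_ne i c with rfl | h
  · simp [Finset.subset_insert]
  · simp [h]

namespace IsAllocation

lemma subset (hA : IsAllocation M A) (i : Fin n) : A i ⊆ M :=
  hA.2 ▸ Finset.subset_biUnion_of_mem A (Finset.mem_univ i)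

lemma comp_perm (hA : IsAllocation M A) (τ : Equiv.Perm (Fin n)) : IsAllocation M (A ∘ τ) := by
  refine ⟨fun i j hij => hA.1 _ _ (τ.injective.ne hij), ?_⟩
  rw [← hA.2]
  ext x
  simp only [Finset.mem_biUnion, Finset.mem_univ, true_and, Function.comp_apply]
  exact (τ.surjective.exists (p := fun i => x ∈ A i)).symm

lemma giveItem (hA : IsAllocation M A) (ha : a ∉ M) (c : Fin n) :
    IsAllocation (insert a M) (_root_.giveItem A c a) := by
  have haA : ∀ i, a ∉ A i := fun i h => ha (hA.subset i h)
  constructor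
  · intro i j hij
    rcases eq_or_ne i c with rfl | hi
    · simpa [Ne.symm hij, haA j] using hA.1 i j hij
    rcases eq_or_ne j c with rfl | hj
    · simpa [hi, haA i] using hA.1 i j hij
    · simpa [hi, hj] using hA.1 i j hij
  · rw [← hA.2]
    ext x
    simp only [Finset.mem_biUnion, Finset.mem_univ, true_and, Finset.mem_insert]
    constructor
    · rintro ⟨i, hi⟩
      rcases eq_or_ne i c with rfl | hic
      · exact (by simpa using hi : x = a ∨ x ∈ A i).imp_right fun h => ⟨i, h⟩
      · exact Or.inr ⟨i, by simpa [hic] using hi⟩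
    · rintro (rfl | ⟨i, hi⟩)
      · exact ⟨c, by simp⟩
      · exact ⟨i, subset_giveItem i hi⟩

end IsAllocation

lemma Finset.eq_empty_or_exists_erase_le {β : Type*} [Preorder β] {u : Finset ι → β}
    {S : Finset ι} {x : β} (hu : MonotoneOn u (Set.Iic M)) (hS : S ⊆ M) (h : u S ≤ x) :
    S = ∅ ∨ ∃ g ∈ S, u (S.erase g) ≤ x :=
  S.eq_empty_or_nonempty.imp_right fun ⟨g, hg⟩ =>
    ⟨g, hg, (hu ((S.erase_subset g).trans hS) hS (S.erase_subset g)).trans h⟩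

def EF1At (v : Fin n → Finset ι → ℝ) (A : Fin n → Finset ι) (i : Fin n) : Prop :=
  ∀ j, i ≠ j → A j = ∅ ∨ ∃ g ∈ A j, v i ((A j).erase g) ≤ v i (A i)

namespace EF1At

lemma of_forall_le (hv : MonotoneOn (v i) (Set.Iic M)) (hA : ∀ j, A j ⊆ M)
    (h : ∀ j, v i (A j) ≤ v i (A i)) : EF1At v A i :=
  fun j _ => Finset.eq_empty_or_exists_erase_le hv (hA j) (h j)

lemma comp_perm (h : EF1At v A i) (hv : MonotoneOn (v i) (Set.Iic M)) (hA : A i ⊆ M)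
    {τ : Equiv.Perm (Fin n)} (hτ : v i (A i) ≤ v i (A (τ i))) : EF1At v (A ∘ τ) i := by
  intro j hij
  by_cases hj : τ j = i
  · simpa only [Function.comp_apply, hj] using Finset.eq_empty_or_exists_erase_le hv hA hτ
  · exact (h (τ j) (Ne.symm hj)).imp_right fun ⟨g, hg, hle⟩ => ⟨g, hg, hle.trans hτ⟩

lemma giveItem_of_ne (h : EF1At v A i) (hic : i ≠ c) (hc : v i (A c) ≤ v i (A i))
    (ha : a ∉ A c) : EF1At v (giveItem A c a) i := by
  intro j hij
  rw [_root_.giveItem_of_ne hic]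
  rcases eq_or_ne j c with rfl | hjc
  · exact Or.inr ⟨a, by simp, by rwa [giveItem_self, Finset.erase_insert ha]⟩
  · rw [_root_.giveItem_of_ne hjc]
    exact h j hij

lemma giveItem_self (h : EF1At v A c) (hv : MonotoneOn (v c) (Set.Iic M))
    (hM : insert a (A c) ⊆ M) : EF1At v (giveItem A c a) c := by
  intro j hcj
  rw [_root_.giveItem_of_ne hcj.symm, _root_.giveItem_self]
  have hle := hv ((Finset.subset_insert a _).trans hM) hM (Finset.subset_insert a (A c))
  exact (h j hcj).imp_right fun ⟨g, hg, hg'⟩ => ⟨g, hg, hg'.trans hle⟩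

end EF1At

lemma EF1.giveItem (h : EF1 v A) (hv : ∀ i, MonotoneOn (v i) (Set.Iic M))
    (hc : ∀ i, v i (A c) ≤ v i (A i)) (ha : a ∉ A c) (hM : insert a (A c) ⊆ M) :
    EF1 v (_root_.giveItem A c a) := fun i => by
  rcases eq_or_ne i c with rfl | hic
  · exact EF1At.giveItem_self (h i) (hv i) hM
  · exact EF1At.giveItem_of_ne (h i) hic (hc i) ha

lemma ef1_giveItem_of_forall_le (h : ∀ i ≠ c, EF1At v A i) (hv : MonotoneOn (v c) (Set.Iic M))
    (hM : ∀ j, giveItem A c a j ⊆ M) (hc : ∀ i ≠ c, v i (A c) ≤ v i (A i)) (ha : a ∉ A c)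
    (hc' : ∀ j, v c (giveItem A c a j) ≤ v c (giveItem A c a c)) :
    EF1 v (giveItem A c a) := fun i => by
  rcases eq_or_ne i c with rfl | hic
  · exact EF1At.of_forall_le hv hM hc'
  · exact (h i hic).giveItem_of_ne hic (hc i hic) ha

theorem exists_allocation_insert (hv : ∀ i, MonotoneOn (v i) (Set.Iic M)) {M' : Finset ι}
    (hM' : M' ⊆ M) (hA : IsAllocation M' A) (hEF : EF1 v A) {p : Fin n}
    (hp : ∀ j, v p (A j) ≤ v p (A p)) (haM : a ∈ M) (ha : a ∉ M') :
    ∃ C, IsAllocation (insert a M') C ∧ EF1 v C ∧ ∀ j, v p (C j) ≤ v p (C p) := by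
  obtain ⟨σ, hσ, hopt⟩ := exists_perm_paretoOptimalAmongPerms v A
  set B := A ∘ σ
  have hB : IsAllocation M' B := hA.comp_perm σ
  have hBM : ∀ j, B j ⊆ M := fun j => (hB.subset j).trans hM'
  have hBEF : EF1 v B := fun i => EF1At.comp_perm (hEF i) (hv i) ((hA.subset i).trans hM') (hσ i)
  have hBp : ∀ j, v p (B j) ≤ v p (B p) := fun j => (hp (σ j)).trans (hσ p)
  have haB : ∀ j, a ∉ B j := fun j h => ha (hB.subset j h)
  have hinsM : insert a M' ⊆ M := Finset.insert_subset haM hM'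
  obtain ⟨τ, hs, hτ⟩ := hopt.exists_perm_unenvied hBp
  by_cases hpa : v p (insert a (B (τ p))) ≤ v p (B p)
  · have hC := hB.giveItem ha (τ p)
    refine ⟨giveItem B (τ p) a, hC,
      hBEF.giveItem hv hs (haB _) (Finset.insert_subset haM (hBM _)), fun j => ?_⟩
    calc v p (giveItem B (τ p) a j) ≤ v p (B p) := by
          rcases eq_or_ne j (τ p) with rfl | hj
          · simpa using hpa
          · simpa [hj] using hBp j
      _ ≤ v p (giveItem B (τ p) a p) :=
          hv p (hBM p) ((hC.subset p).trans hinsM) (subset_giveItem p)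
  · push Not at hpa
    have hC := (hB.comp_perm τ).giveItem ha p
    have hCp : ∀ j, v p (giveItem (B ∘ τ) p a j) ≤ v p (giveItem (B ∘ τ) p a p) := by
      intro j
      rcases eq_or_ne j p with rfl | hj
      · exact le_rfl
      · simpa [hj] using (hBp (τ j)).trans hpa.le
    refine ⟨giveItem (B ∘ τ) p a, hC, ?_, hCp⟩
    exact ef1_giveItem_of_forall_le
      (fun i hi => EF1At.comp_perm (hBEF i) (hv i) (hBM i) (hτ i hi)) (hv p)
      (fun j => (hC.subset j).trans hinsM) (fun i hi => (hs i).trans (hτ i hi)) (haB _) hCp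

theorem exists_allocation_ef1_forall_le (hv : ∀ i, MonotoneOn (v i) (Set.Iic M)) (p : Fin n) :
    ∃ A, IsAllocation M A ∧ EF1 v A ∧ ∀ j, v p (A j) ≤ v p (A p) := by
  refine Finset.induction_on' (motive := fun M' =>
    ∃ A, IsAllocation M' A ∧ EF1 v A ∧ ∀ j, v p (A j) ≤ v p (A p)) M
    ⟨fun _ => ∅, ⟨fun _ _ _ => Finset.disjoint_empty_left _, by ext; simp⟩,
      fun _ _ _ => Or.inl rfl, fun _ => le_rfl⟩ ?_
  rintro a M' haM hM' ha ⟨A, hA, hEF, hp⟩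
  exact exists_allocation_insert hv hM' hA hEF hp haM ha

end Allocation

theorem efprior_exists_single_P_general {ι : Type*} [DecidableEq ι] (n : ℕ) (M : Finset ι)
    (v : Fin n → Finset ι → ℝ)
    (hmono : ∀ i : Fin n, ∀ S T : Finset ι, T ⊆ S → S ⊆ M → v i T ≤ v i S)
    (P : Finset (Fin n))
    (hP : P.card = 1) :
    ∃ A : Fin n → Finset ι, IsAllocation M A ∧ EFprior v A P := by
  obtain ⟨p, rfl⟩ := Finset.card_eq_one.1 hP
  obtain ⟨A, hA, hEF, hp⟩ :=
    exists_allocation_ef1_forall_le (fun i T _ S hS hTS => hmono i S T hTS hS) p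
  exact ⟨A, hA, hEF, fun i hi j _ => Finset.mem_singleton.1 hi ▸ hp j⟩

/-- If there is exactly one prioritized agent, an EFprior allocation
always exists. -/
theorem efprior_exists_single_P {ι : Type*} [DecidableEq ι] (n : ℕ) (M : Finset ι)
    (v : Fin n → Finset ι → ℝ)
    (hnorm : ∀ i : Fin n, v i ∅ = 0)
    (hnonneg : ∀ i : Fin n, ∀ S ⊆ M, 0 ≤ v i S)
    (hmono : ∀ i : Fin n, ∀ S T : Finset ι, T ⊆ S → S ⊆ M → v i T ≤ v i S)
    (P : Finset (Fin n))
    (hP : P.card = 1) :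
    ∃ A : Fin n → Finset ι, IsAllocation M A ∧ EFprior v A P :=
  efprior_exists_single_P_general n M v hmono P hP
end

section
/- Let (A_1, ..., A_n, B) be a partial allocation that is EFprior with respect to P ⊆ N, and let u_0, u_1, ..., u_{k-1} be distinct agents forming a cycle in the envy-graph, i.e., v_{u_i}(A_{u_i}) < v_{u_i}(A_{u_{i+1 mod k}}) for every i ∈ {0,...,k-1}. Define the new partial allocation (A'_1,...,A'_n,B) by A'_{u_i} = A_{u_{i+1 mod k}} for each i and A'_j = A_j for every agent j not on the cycle. Then (A'_1,...,A'_n,B) is also EFprior with respect to P. -/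
/-- `(A, B)` is a partial allocation of the item set `M`: a partition of `M`
into `n` bundles together with a pool `B` of unallocated items. -/
def IsPartialAllocation {ι : Type*} [DecidableEq ι] {n : ℕ} (M : Finset ι)
    (A : Fin n → Finset ι) (B : Finset ι) : Prop :=
  (∀ i j : Fin n, i ≠ j → Disjoint (A i) (A j)) ∧
  (∀ i : Fin n, Disjoint (A i) B) ∧
  Finset.univ.biUnion A ∪ B = M

/-- Eliminating an envy cycle in a partial EFprior allocation (each agent on
the cycle takes the bundle of the next agent on the cycle, everyone else
keeps her bundle) yields a partial allocation that is again EFprior. -/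
theorem cycle_elimination_preserves_efprior {ι : Type*} [DecidableEq ι]
    (n : ℕ) (M : Finset ι)
    (v : Fin n → Finset ι → ℝ)
    (hnorm : ∀ i : Fin n, v i ∅ = 0)
    (hnonneg : ∀ i : Fin n, ∀ S ⊆ M, 0 ≤ v i S)
    (hmono : ∀ i : Fin n, ∀ S T : Finset ι, T ⊆ S → S ⊆ M → v i T ≤ v i S)
    (P : Finset (Fin n))
    (A : Fin n → Finset ι) (B : Finset ι)
    (hpar : IsPartialAllocation M A B)
    (hefp : EFprior v A P)
    (k : ℕ) (hk : 0 < k) (u : Fin k → Fin n) (huinj : Function.Injective u)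
    (hcycle : ∀ i : Fin k,
      v (u i) (A (u i)) < v (u i) (A (u ⟨(i.val + 1) % k, Nat.mod_lt _ hk⟩)))
    (A' : Fin n → Finset ι)
    (hA'cycle : ∀ i : Fin k,
      A' (u i) = A (u ⟨(i.val + 1) % k, Nat.mod_lt _ hk⟩))
    (hA'fix : ∀ j : Fin n, (∀ i : Fin k, u i ≠ j) → A' j = A j) :
    EFprior v A' P := by

  obtain ⟨hdisj, hdisjB, hcover⟩ := hpar
  obtain ⟨hef1, hprior⟩ := hefp
  have hsub : ∀ l : Fin n, A l ⊆ M := by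
    intro l x hx
    rw [← hcover]
    exact Finset.mem_union_left _ (Finset.mem_biUnion.mpr ⟨l, Finset.mem_univ l, hx⟩)
  have himp : ∀ j : Fin n, v j (A j) ≤ v j (A' j) := by
    intro j
    by_cases h : ∃ i : Fin k, u i = j
    · obtain ⟨i, rfl⟩ := h
      rw [hA'cycle i]
      exact (hcycle i).le
    · push_neg at h
      rw [hA'fix j h]
  have hrep : ∀ j : Fin n, ∃ l : Fin n, A' j = A l := by
    intro j
    by_cases h : ∃ i : Fin k, u i = j
    · obtain ⟨i, rfl⟩ := h
      exact ⟨_, hA'cycle i⟩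
    · push_neg at h
      exact ⟨j, hA'fix j h⟩
  have hnext : ∀ i : Fin k, u i ∈ P → u ⟨(i.val + 1) % k, Nat.mod_lt _ hk⟩ ∈ P := by
    intro i hi
    by_contra hnp
    exact absurd (hprior _ hi _ hnp) (not_le.mpr (hcycle i))
  have hallP : (∃ i : Fin k, u i ∈ P) → ∀ t : Fin k, u t ∈ P := by
    rintro ⟨s, hs⟩ t
    have step : ∀ m : ℕ, u ⟨(s.val + m) % k, Nat.mod_lt _ hk⟩ ∈ P := by
      intro m
      induction m with
      | zero =>
        have h0 : (⟨(s.val + 0) % k, Nat.mod_lt _ hk⟩ : Fin k) = s :=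
          Fin.ext (by simp [Nat.mod_eq_of_lt s.isLt])
        rw [h0]; exact hs
      | succ m ih =>
        have := hnext _ ih
        have hnat : ((s.val + m) % k + 1) % k = (s.val + (m + 1)) % k := by
          rw [Nat.mod_add_mod, Nat.add_assoc]
        have h1 : (⟨((s.val + m) % k + 1) % k, Nat.mod_lt _ hk⟩ : Fin k)
            = ⟨(s.val + (m + 1)) % k, Nat.mod_lt _ hk⟩ := Fin.ext hnat
        rwa [h1] at this
    have hs' := s.isLt
    have he : (s.val + (k - s.val + t.val)) % k = t.val := by
      have h2 : s.val + (k - s.val + t.val) = k + t.val := by omega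
      rw [h2, Nat.add_mod_left, Nat.mod_eq_of_lt t.isLt]
    have := step (k - s.val + t.val)
    simp only [he] at this
    exact this
  have hrepP : ∀ j : Fin n, j ∉ P → ∃ l : Fin n, l ∉ P ∧ A' j = A l := by
    intro j hj
    by_cases h : ∃ i : Fin k, u i = j
    · obtain ⟨i, rfl⟩ := h
      refine ⟨_, ?_, hA'cycle i⟩
      intro hmem
      exact hj (hallP ⟨_, hmem⟩ i)
    · push_neg at h
      exact ⟨j, hj, hA'fix j h⟩
  constructor
  · intro i j hij
    obtain ⟨l, hl⟩ := hrep j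
    by_cases hli : l = i
    · rw [hli] at hl
      by_cases he : A' j = ∅
      · exact Or.inl he
      · right
        obtain ⟨g, hg⟩ := Finset.nonempty_iff_ne_empty.mpr he
        refine ⟨g, hg, ?_⟩
        calc v i ((A' j).erase g) ≤ v i (A' j) :=
              hmono i _ _ (Finset.erase_subset _ _) (hl ▸ hsub i)
          _ = v i (A i) := by rw [hl]
          _ ≤ v i (A' i) := himp i
    · rcases hef1 i l (fun h => hli h.symm) with h0 | ⟨g, hg, hle⟩
      · left; rw [hl, h0]
      · right; rw [hl]; exact ⟨g, hg, le_trans hle (himp i)⟩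
  · intro i hi j hj
    obtain ⟨l, hlP, hl⟩ := hrepP j hj
    rw [hl]
    exact le_trans (hprior i hi l hlP) (himp i)
end

section
/- Let (A_1, ..., A_n, B) be a partial allocation that is EFprior with respect to P ⊆ N, let i ∈ P be a source agent (no agent envies i, i.e., v_j(A_j) ≥ v_j(A_i) for all j ≠ i), and let g ∈ B. Then the partial allocation obtained by replacing A_i with A_i ∪ {g} and B with B \ {g} is EFprior with respect to P. -/
/-- Rule U0: allocating a pool item to a source agent in P preserves
EFprior. -/
theorem add_item_to_P_source_preserves_efprior {ι : Type*} [DecidableEq ι]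
    (n : ℕ) (M : Finset ι)
    (v : Fin n → Finset ι → ℝ)
    (hnorm : ∀ i : Fin n, v i ∅ = 0)
    (hnonneg : ∀ i : Fin n, ∀ S ⊆ M, 0 ≤ v i S)
    (hmono : ∀ i : Fin n, ∀ S T : Finset ι, T ⊆ S → S ⊆ M → v i T ≤ v i S)
    (P : Finset (Fin n))
    (A : Fin n → Finset ι) (B : Finset ι)
    (hpar : IsPartialAllocation M A B)
    (hefp : EFprior v A P)
    (i : Fin n) (hiP : i ∈ P)
    (hsource : ∀ j : Fin n, j ≠ i → v j (A i) ≤ v j (A j))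
    (g : ι) (hg : g ∈ B) :
    IsPartialAllocation M (Function.update A i (insert g (A i))) (B.erase g) ∧
    EFprior v (Function.update A i (insert g (A i))) P := by
  obtain ⟨hdisj, hdisjB, hcov⟩ := hpar
  obtain ⟨hef1, hprior⟩ := hefp
  have hsubM : ∀ j : Fin n, A j ⊆ M := by
    intro j x hx
    rw [← hcov]
    exact Finset.mem_union_left _ (Finset.mem_biUnion.mpr ⟨j, Finset.mem_univ _, hx⟩)
  have hgM : g ∈ M := by
    rw [← hcov]; exact Finset.mem_union_right _ hg
  have hgnotA : ∀ j : Fin n, g ∉ A j := fun j h => Finset.disjoint_left.mp (hdisjB j) h hg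
  have hgnotAi : g ∉ A i := hgnotA i
  have hinsM : insert g (A i) ⊆ M := Finset.insert_subset hgM (hsubM i)
  have hupd : ∀ j : Fin n, j ≠ i → Function.update A i (insert g (A i)) j = A j := by
    intro j hj; exact Function.update_of_ne hj _ _
  have hupdi : Function.update A i (insert g (A i)) i = insert g (A i) :=
    Function.update_self _ _ _
  have hsubM' : ∀ j : Fin n, Function.update A i (insert g (A i)) j ⊆ M := by
    intro j
    by_cases hji : j = i
    · subst hji; rw [hupdi]; exact hinsM
    · rw [hupd j hji]; exact hsubM j
  -- own bundle doesn't decrease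
  have hown : ∀ j : Fin n, v j (A j) ≤ v j (Function.update A i (insert g (A i)) j) := by
    intro j
    by_cases hji : j = i
    · subst hji; rw [hupdi]
      exact hmono _ _ _ (Finset.subset_insert _ _) hinsM
    · rw [hupd j hji]
  refine ⟨⟨?_, ?_, ?_⟩, ?_, ?_⟩
  · -- pairwise disjoint
    intro j k hjk
    by_cases hji : j = i
    · rw [hji, hupdi, hupd k (hji ▸ hjk.symm)]
      rw [Finset.disjoint_insert_left]
      exact ⟨hgnotA k, hdisj _ _ (hji ▸ hjk)⟩
    · rw [hupd j hji]
      by_cases hki : k = i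
      · rw [hki, hupdi, Finset.disjoint_insert_right]
        exact ⟨hgnotA j, hdisj _ _ (hki ▸ hjk)⟩
      · rw [hupd k hki]; exact hdisj _ _ hjk
  · -- disjoint from pool
    intro j
    by_cases hji : j = i
    · rw [hji, hupdi, Finset.disjoint_insert_left]
      exact ⟨Finset.notMem_erase _ _, (hdisjB i).mono_right (Finset.erase_subset _ _)⟩
    · rw [hupd j hji]
      exact (hdisjB j).mono_right (Finset.erase_subset _ _)
  · -- coverage
    ext x
    simp only [Finset.mem_union, Finset.mem_biUnion, Finset.mem_univ, true_and,
      Finset.mem_erase]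
    constructor
    · rintro (⟨j, hj⟩ | ⟨hx, hxB⟩)
      · by_cases hji : j = i
        · rw [hji, hupdi, Finset.mem_insert] at hj
          rcases hj with rfl | hj
          · exact hgM
          · exact hsubM i hj
        · rw [hupd j hji] at hj; exact hsubM j hj
      · rw [← hcov]; exact Finset.mem_union_right _ hxB
    · intro hx
      rw [← hcov] at hx
      rcases Finset.mem_union.mp hx with hx | hx
      · obtain ⟨j, _, hj⟩ := Finset.mem_biUnion.mp hx
        left
        by_cases hji : j = i
        · exact ⟨i, by rw [hupdi]; exact Finset.mem_insert_of_mem (hji ▸ hj)⟩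
        · exact ⟨j, by rw [hupd j hji]; exact hj⟩
      · by_cases hxg : x = g
        · subst hxg
          exact Or.inl ⟨i, by rw [hupdi]; exact Finset.mem_insert_self _ _⟩
        · exact Or.inr ⟨hxg, hx⟩
  · -- EF1
    intro j k hjk
    by_cases hki : k = i
    · rw [hki]
      right
      refine ⟨g, by rw [hupdi]; exact Finset.mem_insert_self _ _, ?_⟩
      rw [hupdi, Finset.erase_insert hgnotAi]
      calc v j (A i) ≤ v j (A j) := hsource j (hki ▸ hjk)
        _ ≤ _ := hown j
    · rw [hupd k hki]
      rcases hef1 j k hjk with h | ⟨g', hg', h⟩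
      · exact Or.inl h
      · exact Or.inr ⟨g', hg', h.trans (hown j)⟩
  · -- priority
    intro p hp j hj
    have hji : j ≠ i := fun h => hj (h ▸ hiP)
    rw [hupd j hji]
    exact (hprior p hp j hj).trans (hown p)
end

section
/- Let (A_1, ..., A_n, B) be a partial allocation that is EFprior with respect to P ⊆ N, let i ∈ Q = N \ P be a source agent (no agent envies i, i.e., v_j(A_j) ≥ v_j(A_i) for all j ≠ i), and let g ∈ B be an item such that v_p(A_p) ≥ v_p(A_i ∪ {g}) for every p ∈ P. Then the partial allocation obtained by replacing A_i with A_i ∪ {g} and B with B \ {g} is EFprior with respect to P. -/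
/-- Rule U1: allocating a pool item `g` to a source agent `i` in Q preserves
EFprior, provided no prioritized agent envies `A i ∪ {g}`. -/
theorem add_item_to_Q_source_preserves_efprior {ι : Type*} [DecidableEq ι]
    (n : ℕ) (M : Finset ι)
    (v : Fin n → Finset ι → ℝ)
    (hnorm : ∀ i : Fin n, v i ∅ = 0)
    (hnonneg : ∀ i : Fin n, ∀ S ⊆ M, 0 ≤ v i S)
    (hmono : ∀ i : Fin n, ∀ S T : Finset ι, T ⊆ S → S ⊆ M → v i T ≤ v i S)
    (P : Finset (Fin n))
    (A : Fin n → Finset ι) (B : Finset ι)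
    (hpar : IsPartialAllocation M A B)
    (hefp : EFprior v A P)
    (i : Fin n) (hiQ : i ∉ P)
    (hsource : ∀ j : Fin n, j ≠ i → v j (A i) ≤ v j (A j))
    (g : ι) (hg : g ∈ B)
    (hnoenvy : ∀ p ∈ P, v p (insert g (A i)) ≤ v p (A p)) :
    IsPartialAllocation M (Function.update A i (insert g (A i))) (B.erase g) ∧
    EFprior v (Function.update A i (insert g (A i))) P := by
  obtain ⟨hdisj, hAB, hunion⟩ := hpar
  obtain ⟨hef1, hprior⟩ := hefp
  have hsubM : ∀ j : Fin n, A j ⊆ M := by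
    intro j x hx
    rw [← hunion]
    exact Finset.mem_union_left _ (Finset.mem_biUnion.mpr ⟨j, Finset.mem_univ j, hx⟩)
  have hgM : g ∈ M := by
    rw [← hunion]; exact Finset.mem_union_right _ hg
  have hgAi : g ∉ A i := fun h => absurd hg (Finset.disjoint_left.mp (hAB i) h)
  have hinsM : insert g (A i) ⊆ M := Finset.insert_subset hgM (hsubM i)
  have hupd : ∀ j : Fin n, j ≠ i → Function.update A i (insert g (A i)) j = A j := by
    intro j hj; simp [Function.update_of_ne hj]
  refine ⟨⟨?_, ?_, ?_⟩, ?_, ?_⟩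
  · intro j k hjk
    rcases eq_or_ne j i with rfl | hji
    · rw [hupd k hjk.symm, Function.update_self]
      refine Finset.disjoint_left.mpr ?_
      intro x hx hxk
      rcases Finset.mem_insert.mp hx with rfl | hx
      · exact Finset.disjoint_left.mp (hAB k) hxk hg
      · exact Finset.disjoint_left.mp (hdisj j k hjk) hx hxk
    · rw [hupd j hji]
      rcases eq_or_ne k i with rfl | hki
      · rw [Function.update_self]
        refine Finset.disjoint_left.mpr ?_
        intro x hxj hx
        rcases Finset.mem_insert.mp hx with rfl | hx
        · exact Finset.disjoint_left.mp (hAB j) hxj hg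
        · exact Finset.disjoint_left.mp (hdisj j k hjk) hxj hx
      · rw [hupd k hki]; exact hdisj j k hjk
  · intro j
    rcases eq_or_ne j i with rfl | hji
    · rw [Function.update_self]
      refine Finset.disjoint_left.mpr ?_
      intro x hx hxB
      rcases Finset.mem_insert.mp hx with rfl | hx
      · exact (Finset.notMem_erase x B) hxB
      · exact Finset.disjoint_left.mp (hAB j) hx (Finset.mem_of_mem_erase hxB)
    · rw [hupd j hji]
      exact (hAB j).mono_right (Finset.erase_subset _ _)
  · rw [← hunion]
    ext x
    simp only [Finset.mem_union, Finset.mem_biUnion, Finset.mem_univ, true_and,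
      Finset.mem_erase]
    constructor
    · rintro (⟨j, hj⟩ | ⟨hxg, hxB⟩)
      · rcases eq_or_ne j i with rfl | hji
        · rw [Function.update_self] at hj
          rcases Finset.mem_insert.mp hj with rfl | hj
          · exact Or.inr hg
          · exact Or.inl ⟨j, hj⟩
        · rw [hupd j hji] at hj; exact Or.inl ⟨j, hj⟩
      · exact Or.inr hxB
    · rintro (⟨j, hj⟩ | hxB)
      · rcases eq_or_ne j i with rfl | hji
        · exact Or.inl ⟨j, by rw [Function.update_self]; exact Finset.mem_insert_of_mem hj⟩
        · exact Or.inl ⟨j, by rw [hupd j hji]; exact hj⟩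
      · rcases eq_or_ne x g with rfl | hxg
        · exact Or.inl ⟨i, by rw [Function.update_self]; exact Finset.mem_insert_self _ _⟩
        · exact Or.inr ⟨hxg, hxB⟩
  · intro j k hjk
    rcases eq_or_ne k i with rfl | hki
    · rw [Function.update_self, hupd j hjk]
      refine Or.inr ⟨g, Finset.mem_insert_self _ _, ?_⟩
      rw [Finset.erase_insert hgAi]
      exact hsource j hjk
    · rw [hupd k hki]
      rcases eq_or_ne j i with rfl | hji
      · rw [Function.update_self]
        rcases hef1 j k hjk with h | ⟨g', hg', h⟩
        · exact Or.inl h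
        · exact Or.inr ⟨g', hg', h.trans (hmono j _ _ (Finset.subset_insert _ _) hinsM)⟩
      · rw [hupd j hji]; exact hef1 j k hjk
  · intro p hp j hj
    rw [hupd p (fun h => hiQ (h ▸ hp))]
    rcases eq_or_ne j i with rfl | hji
    · rw [Function.update_self]; exact hnoenvy p hp
    · rw [hupd j hji]; exact hprior p hp j hj
end

section
/- Let (A_1, ..., A_n, B) be a partial allocation that is EF1, and let u_0, u_1, ..., u_{k-1} be distinct agents forming a cycle in the envy-graph, i.e., v_{u_i}(A_{u_i}) < v_{u_i}(A_{u_{i+1 mod k}}) for every i. Define the new partial allocation (A'_1,...,A'_n,B) by A'_{u_i} = A_{u_{i+1 mod k}} for each i and A'_j = A_j for every agent j not on the cycle. Then (A'_1,...,A'_n,B) is EF1 and every agent's value for her own bundle weakly increases, with v_{u_i}(A'_{u_i}) > v_{u_i}(A_{u_i}) strictly for each agent u_i on the cycle. -/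
/-- Eliminating an envy cycle in an EF1 partial allocation preserves EF1,
weakly increases every agent's value for her own bundle, and strictly
increases it for every agent on the cycle. -/
theorem cycle_elimination_preserves_ef1 {ι : Type*} [DecidableEq ι]
    (n : ℕ) (M : Finset ι)
    (v : Fin n → Finset ι → ℝ)
    (hnorm : ∀ i : Fin n, v i ∅ = 0)
    (hnonneg : ∀ i : Fin n, ∀ S ⊆ M, 0 ≤ v i S)
    (hmono : ∀ i : Fin n, ∀ S T : Finset ι, T ⊆ S → S ⊆ M → v i T ≤ v i S)
    (A : Fin n → Finset ι) (B : Finset ι)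
    (hpar : IsPartialAllocation M A B)
    (hef1 : EF1 v A)
    (k : ℕ) (hk : 0 < k) (u : Fin k → Fin n) (huinj : Function.Injective u)
    (hcycle : ∀ i : Fin k,
      v (u i) (A (u i)) < v (u i) (A (u ⟨(i.val + 1) % k, Nat.mod_lt _ hk⟩)))
    (A' : Fin n → Finset ι)
    (hA'cycle : ∀ i : Fin k,
      A' (u i) = A (u ⟨(i.val + 1) % k, Nat.mod_lt _ hk⟩))
    (hA'fix : ∀ j : Fin n, (∀ i : Fin k, u i ≠ j) → A' j = A j) :
    EF1 v A' ∧ (∀ j : Fin n, v j (A j) ≤ v j (A' j)) ∧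
      (∀ i : Fin k, v (u i) (A (u i)) < v (u i) (A' (u i))) := by
  obtain ⟨hdisj, hdisjB, hcover⟩ := hpar
  have hsub : ∀ j : Fin n, A j ⊆ M := by
    intro j x hx
    rw [← hcover]
    exact Finset.mem_union_left _ (Finset.mem_biUnion.2 ⟨j, Finset.mem_univ j, hx⟩)
  have hsource : ∀ j : Fin n, ∃ j' : Fin n, A' j = A j' := by
    intro j
    by_cases h : ∃ i : Fin k, u i = j
    · obtain ⟨i, hi⟩ := h
      exact ⟨u ⟨(i.val+1)%k, Nat.mod_lt _ hk⟩, by rw [← hi, hA'cycle i]⟩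
    · push_neg at h
      exact ⟨j, hA'fix j h⟩
  have hweak : ∀ j : Fin n, v j (A j) ≤ v j (A' j) := by
    intro j
    by_cases h : ∃ i : Fin k, u i = j
    · obtain ⟨i, hi⟩ := h
      subst hi
      rw [hA'cycle i]
      exact (hcycle i).le
    · push_neg at h
      rw [hA'fix j h]
  refine ⟨?_, hweak, ?_⟩
  · intro i j hij
    obtain ⟨j', hj'⟩ := hsource j
    rw [hj']
    by_cases hii : i = j'
    · subst hii
      by_cases hemp : A i = ∅
      · exact Or.inl hemp
      · obtain ⟨g, hg⟩ := Finset.nonempty_iff_ne_empty.2 hemp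
        refine Or.inr ⟨g, hg, ?_⟩
        calc v i ((A i).erase g) ≤ v i (A i) :=
              hmono i (A i) _ (Finset.erase_subset _ _) (hsub i)
          _ ≤ v i (A' i) := hweak i
    · rcases hef1 i j' hii with h | ⟨g, hg, hle⟩
      · exact Or.inl h
      · exact Or.inr ⟨g, hg, hle.trans (hweak i)⟩
  · intro i
    rw [hA'cycle i]
    exact hcycle i
end
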